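/- arXiv:1009.0855 — 3 statements merged into one kernel-verified Lean document; each statement's English description precedes it below -/
import Mathlib

section
/- For every x in the deficient digit set Ω^L whose binary expansion does not end in 0^∞, there exists a strictly increasing sequence (x_k) in Ω^L with x_k → x and τ(x_k) < τ(x) for all k. -/
open Finset

/-- Distance from `t` to the nearest integer. -/
noncomputable def distNearestInt (t : ℝ) : ℝ := ⨅ n : ℤ, |t - (n : ℝ)|

/-- The Takagi function. -/
noncomputable def takagi (x : ℝ) : ℝ := ∑' n : ℕ, distNearestInt (2 ^ n * x) / 2 ^ n

/-- The partial Takagi function of level `n`. -/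
noncomputable def takagiPartial (n : ℕ) (x : ℝ) : ℝ :=
  ∑ j ∈ Finset.range n, distNearestInt (2 ^ j * x) / 2 ^ j

/-- The deficient digit function `D_j` attached to a binary digit sequence `b`
(with `b i` the `(i+1)`-st binary digit): number of 0's minus number of 1's
among the first `j` digits. -/
def defD (b : ℕ → ℕ) (j : ℕ) : ℤ := (j : ℤ) - 2 * ∑ i ∈ Finset.range j, (b i : ℤ)

/-- `x` is the real number with binary expansion `0.b₁b₂b₃…`, `b i` being digit `i+1`. -/
def IsBinaryExpansion (b : ℕ → ℕ) (x : ℝ) : Prop :=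
  (∀ i, b i ≤ 1) ∧ x = ∑' i : ℕ, (b i : ℝ) / 2 ^ (i + 1)

/-- The deficient digit set `Ω^L`. -/
def OmegaL : Set ℝ :=
  {x | ∃ b : ℕ → ℕ, IsBinaryExpansion b x ∧ ∀ j ≥ 1, 0 ≤ defD b j}

open Finset

lemma dni_eq (t : ℝ) : distNearestInt t = min (Int.fract t) (1 - Int.fract t) := by
  have hbdd : BddBelow (Set.range fun n : ℤ => |t - (n : ℝ)|) := by
    refine ⟨0, ?_⟩; rintro y ⟨n, rfl⟩; positivity
  apply le_antisymm
  · apply le_min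
    · have := ciInf_le hbdd (⌊t⌋ : ℤ)
      rwa [show |t - (⌊t⌋:ℝ)| = Int.fract t by
        rw [abs_of_nonneg (by simpa using Int.fract_nonneg t)]; rfl] at this
    · have := ciInf_le hbdd ((⌊t⌋ + 1 : ℤ))
      rwa [show |t - ((⌊t⌋ + 1 : ℤ):ℝ)| = 1 - Int.fract t by
        push_cast
        rw [abs_of_nonpos (by nlinarith [Int.fract_lt_one t, Int.self_sub_floor t])]
        nlinarith [Int.self_sub_floor t]] at this
  · apply le_ciInf; intro n
    rcases le_or_gt (n : ℝ) ⌊t⌋ with h | h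
    · calc min (Int.fract t) (1 - Int.fract t) ≤ Int.fract t := min_le_left _ _
        _ ≤ |t - n| := by
          rw [le_abs]; left
          nlinarith [Int.self_sub_floor t]
    · have h1 : (⌊t⌋ : ℝ) + 1 ≤ n := by exact_mod_cast Int.lt_iff_add_one_le.1 (by exact_mod_cast h)
      calc min (Int.fract t) (1 - Int.fract t) ≤ 1 - Int.fract t := min_le_right _ _
        _ ≤ |t - n| := by
          rw [le_abs]; right
          nlinarith [Int.self_sub_floor t]

lemma dni_nonneg (t : ℝ) : 0 ≤ distNearestInt t := by
  rw [dni_eq]; exact le_min (Int.fract_nonneg t) (by nlinarith [Int.fract_lt_one t])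

lemma dni_le_half (t : ℝ) : distNearestInt t ≤ 1/2 := by
  rw [dni_eq]
  rcases le_or_gt (Int.fract t) (1/2) with h | h
  · exact le_trans (min_le_left _ _) h
  · exact le_trans (min_le_right _ _) (by linarith)

lemma dni_int_add (m : ℤ) (s : ℝ) : distNearestInt ((m : ℝ) + s) = distNearestInt s := by
  rw [dni_eq, dni_eq, Int.fract_intCast_add]

lemma dni_of_le_half (s : ℝ) (h0 : 0 ≤ s) (h1 : s ≤ 1/2) : distNearestInt s = s := by
  rw [dni_eq, Int.fract_eq_self.2 ⟨h0, by linarith⟩, min_eq_left (by linarith)]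

lemma dni_of_half_le (s : ℝ) (h0 : 1/2 ≤ s) (h1 : s ≤ 1) : distNearestInt s = 1 - s := by
  rcases eq_or_lt_of_le h1 with rfl | h1
  · rw [dni_eq]; norm_num
  · rw [dni_eq, Int.fract_eq_self.2 ⟨by linarith, h1⟩, min_eq_right (by linarith)]

lemma dni_intCast (m : ℤ) : distNearestInt (m : ℝ) = 0 := by
  rw [dni_eq, Int.fract_intCast]; norm_num

noncomputable def tailS (b : ℕ → ℕ) (n : ℕ) : ℝ := ∑' i : ℕ, (b (n + i) : ℝ) / 2 ^ (i + 1)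

lemma summable_half : Summable (fun i : ℕ => (1:ℝ) / 2 ^ (i + 1)) := by
  have := (summable_geometric_of_lt_one (by norm_num) (by norm_num : (1/2:ℝ) < 1)).mul_left (1/2)
  refine this.congr fun i => ?_
  rw [pow_succ, div_pow, one_pow]; ring

lemma summable_tail' (c : ℕ → ℕ) (hc : ∀ i, c i ≤ 1) (n : ℕ) :
    Summable (fun i : ℕ => (c (n + i) : ℝ) / 2 ^ (i + 1)) := by
  refine Summable.of_nonneg_of_le (fun i => by positivity) (fun i => ?_) summable_half
  gcongr
  exact_mod_cast hc (n + i)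

lemma tailS_nonneg (c : ℕ → ℕ) (n : ℕ) : 0 ≤ tailS c n :=
  tsum_nonneg fun i => by positivity

lemma sum_half : ∑' i : ℕ, (1:ℝ) / 2 ^ (i + 1) = 1 := by
  have h : (fun i : ℕ => (1:ℝ) / 2 ^ (i + 1)) = fun i : ℕ => 1/2/2^i := by
    funext i; rw [pow_succ]; ring
  rw [h, tsum_geometric_two' 1]

lemma tailS_le_one (c : ℕ → ℕ) (hc : ∀ i, c i ≤ 1) (n : ℕ) : tailS c n ≤ 1 := by
  rw [← sum_half]
  refine Summable.tsum_le_tsum (fun i => ?_) (summable_tail' c hc n) summable_half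
  gcongr; exact_mod_cast hc (n + i)

lemma tailS_rec (c : ℕ → ℕ) (hc : ∀ i, c i ≤ 1) (n : ℕ) :
    tailS c n = (c n : ℝ) / 2 + tailS c (n + 1) / 2 := by
  rw [tailS, Summable.tsum_eq_zero_add (summable_tail' c hc n)]
  congr 1
  · norm_num
  · rw [tailS, ← tsum_div_const]
    congr 1; funext i
    rw [show n + (i+1) = n + 1 + i by ring]
    rw [pow_succ]; ring

lemma half_le_tailS (c : ℕ → ℕ) (hc : ∀ i, c i ≤ 1) (n : ℕ) (h1 : c n = 1) :
    1/2 ≤ tailS c n := by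
  rw [tailS_rec c hc n, h1]
  have := tailS_nonneg c (n + 1)
  push_cast; linarith

lemma tailS_lt_one_aux (c : ℕ → ℕ) (hc : ∀ i, c i ≤ 1) :
    ∀ k n, c (n + k) = 0 → tailS c n < 1 := by
  intro k
  induction k with
  | zero =>
    intro n h0
    rw [tailS_rec c hc n, show c n = 0 by simpa using h0]
    have := tailS_le_one c hc (n + 1)
    push_cast; linarith
  | succ k ih =>
    intro n h0
    have h1 : tailS c (n + 1) < 1 := ih (n + 1) (by rw [show n + 1 + k = n + (k+1) by ring]; exact h0)
    rw [tailS_rec c hc n]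
    have hc' : (c n : ℝ) ≤ 1 := by exact_mod_cast hc n
    linarith

lemma tailS_lt_one (c : ℕ → ℕ) (hc : ∀ i, c i ≤ 1) (n m : ℕ) (hnm : n ≤ m) (h0 : c m = 0) :
    tailS c n < 1 :=
  tailS_lt_one_aux c hc (m - n) n (by rwa [Nat.add_sub_cancel' hnm])

/-- The value of the binary expansion. -/
noncomputable def valS (c : ℕ → ℕ) : ℝ := ∑' i : ℕ, (c i : ℝ) / 2 ^ (i + 1)

lemma valS_eq (c : ℕ → ℕ) (hc : ∀ i, c i ≤ 1) (n : ℕ) :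
    valS c = (∑ i ∈ range n, (c i : ℝ) / 2 ^ (i + 1)) + (1/2)^n * tailS c n := by
  have hsum : Summable (fun i : ℕ => (c i : ℝ) / 2 ^ (i + 1)) := by
    have := summable_tail' c hc 0
    simpa using this
  rw [valS, ← Summable.sum_add_tsum_nat_add n hsum]
  congr 1
  rw [tailS, ← tsum_mul_left]
  congr 1; funext i
  rw [show i + n + 1 = n + (i + 1) by ring, pow_add, div_pow, one_pow, show n + i = i + n by ring]
  ring

lemma pow_mul_valS (c : ℕ → ℕ) (hc : ∀ i, c i ≤ 1) (n : ℕ) :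
    2 ^ n * valS c = ((∑ i ∈ range n, c i * 2 ^ (n - i - 1) : ℕ) : ℝ) + tailS c n := by
  rw [valS_eq c hc n]
  rw [mul_add]
  congr 1
  · push_cast
    rw [Finset.mul_sum]
    refine Finset.sum_congr rfl fun i hi => ?_
    have hin : i < n := Finset.mem_range.1 hi
    have : (2:ℝ) ^ n = 2 ^ (i + 1) * 2 ^ (n - i - 1) := by
      rw [← pow_add]; congr 1; omega
    rw [this]
    field_simp
  · rw [div_pow, one_pow]
    have h2 : (2:ℝ)^n ≠ 0 := by positivity
    field_simp

lemma dni_pow_mul (c : ℕ → ℕ) (hc : ∀ i, c i ≤ 1) (n : ℕ) :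
    distNearestInt (2 ^ n * valS c) =
      if c n = 0 then tailS c n else 1 - tailS c n := by
  rw [pow_mul_valS c hc n]
  rw [show ((∑ i ∈ range n, c i * 2 ^ (n - i - 1) : ℕ) : ℝ) =
      ((∑ i ∈ range n, c i * 2 ^ (n - i - 1) : ℕ) : ℤ) by push_cast; ring]
  rw [dni_int_add]
  rcases Nat.le_one_iff_eq_zero_or_eq_one.1 (hc n) with h | h
  · rw [if_pos h]
    have hrec := tailS_rec c hc n
    rw [h] at hrec
    have h1 := tailS_le_one c hc (n + 1)
    have h0 := tailS_nonneg c (n + 1)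
    refine dni_of_le_half _ (tailS_nonneg c n) ?_
    push_cast at hrec; linarith
  · rw [if_neg (by omega)]
    have hrec := tailS_rec c hc n
    rw [h] at hrec
    have h1 := tailS_le_one c hc (n + 1)
    have h0 := tailS_nonneg c (n + 1)
    refine dni_of_half_le _ ?_ (tailS_le_one c hc n)
    push_cast at hrec; linarith




lemma summable_takagi (y : ℝ) : Summable (fun n : ℕ => distNearestInt (2 ^ n * y) / 2 ^ n) := by
  refine Summable.of_nonneg_of_le (fun n => div_nonneg (dni_nonneg _) (by positivity))
    (fun n => ?_) (summable_geometric_of_lt_one (by norm_num) (by norm_num : (1/2:ℝ) < 1))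
  rw [div_pow, one_pow]
  gcongr
  exact le_trans (dni_le_half _) (by norm_num)

lemma takagi_split (y : ℝ) (J : ℕ) :
    takagi y = takagiPartial J y + ∑' n : ℕ, distNearestInt (2 ^ (n + J) * y) / 2 ^ (n + J) := by
  rw [takagi, takagiPartial, ← Summable.sum_add_tsum_nat_add J (summable_takagi y)]

lemma key_lt (c : ℕ → ℕ) (hc : ∀ i, c i ≤ 1) (J : ℕ) (hcJ : c J = 1)
    (m : ℕ) (hm : J ≤ m) (hm0 : c m = 0) (hD : 0 ≤ defD c J) :
    takagi (valS (fun i => if i < J then c i else 0)) < takagi (valS c) := by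
  set c' : ℕ → ℕ := fun i => if i < J then c i else 0 with hc'def
  have hc' : ∀ i, c' i ≤ 1 := fun i => by
    by_cases h : i < J <;> simp [hc'def, h, hc i]
  have hagree : ∀ i, i < J → c' i = c i := fun i h => by simp [hc'def, h]
  have htail0 : ∀ n, J ≤ n → tailS c' n = 0 := by
    intro n hn
    rw [tailS]
    convert tsum_zero with i
    rw [show c' (n + i) = 0 by simp [hc'def]; omega]
    norm_num
  set x := valS c with hxdef
  set u := valS c' with hudef
  have hNeq : ∀ n, n ≤ J → (∑ i ∈ range n, c i * 2 ^ (n - i - 1))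
      = ∑ i ∈ range n, c' i * 2 ^ (n - i - 1) := by
    intro n hn
    refine Finset.sum_congr rfl fun i hi => ?_
    rw [hagree i (by have := Finset.mem_range.1 hi; omega)]
  have hdiff : ∀ n, n ≤ J → tailS c n - tailS c' n = 2 ^ n * (x - u) := by
    intro n hn
    have h1 := pow_mul_valS c hc n
    have h2 := pow_mul_valS c' hc' n
    have h3 : ((∑ i ∈ range n, c i * 2 ^ (n - i - 1) : ℕ) : ℝ)
        = ((∑ i ∈ range n, c' i * 2 ^ (n - i - 1) : ℕ) : ℝ) := by
      rw [hNeq n hn]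
    rw [mul_sub]
    rw [← hxdef] at h1
    rw [← hudef] at h2
    linarith
  have hdelta : x - u = (1/2)^J * tailS c J := by
    have h1 := valS_eq c hc J
    have h2 := valS_eq c' hc' J
    have h3 : ∑ i ∈ range J, (c i : ℝ) / 2 ^ (i + 1)
        = ∑ i ∈ range J, (c' i : ℝ) / 2 ^ (i + 1) := by
      refine Finset.sum_congr rfl fun i hi => ?_
      rw [hagree i (Finset.mem_range.1 hi)]
    rw [htail0 J le_rfl, mul_zero, add_zero] at h2
    rw [← hxdef] at h1
    rw [← hudef] at h2
    linarith
  have htJ0 := tailS_nonneg c J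
  have hδ0 : 0 ≤ x - u := by
    rw [hdelta]; positivity
  have htJhalf : 1/2 ≤ tailS c J := half_le_tailS c hc J hcJ
  have htJlt : tailS c J < 1 := tailS_lt_one c hc J m hm hm0
  have hDr : (0:ℝ) ≤ (defD c J : ℝ) := by exact_mod_cast hD
  -- difference of partial sums
  have hpart : takagiPartial J x - takagiPartial J u = (x - u) * (defD c J : ℝ) := by
    rw [takagiPartial, takagiPartial, ← Finset.sum_sub_distrib]
    have hterm : ∀ n ∈ range J,
        distNearestInt (2 ^ n * x) / 2 ^ n - distNearestInt (2 ^ n * u) / 2 ^ n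
        = (1 - 2 * (c n : ℝ)) * (x - u) := by
      intro n hn
      have hnJ : n < J := Finset.mem_range.1 hn
      have h2n : (0:ℝ) < 2 ^ n := by positivity
      rw [hxdef, hudef, dni_pow_mul c hc n, dni_pow_mul c' hc' n]
      have hcc : c' n = c n := hagree n hnJ
      have hd := hdiff n (le_of_lt hnJ)
      rcases Nat.le_one_iff_eq_zero_or_eq_one.1 (hc n) with h | h
      · rw [if_pos h, if_pos (by rw [hcc]; exact h), ← sub_div, hd, h]
        push_cast
        field_simp
        rw [hxdef, hudef]; ring
      · rw [if_neg (by omega), if_neg (by rw [hcc]; omega), ← sub_div,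
          show (1 - tailS c n) - (1 - tailS c' n) = -(tailS c n - tailS c' n) by ring, hd, h]
        push_cast
        field_simp
        ring
    rw [Finset.sum_congr rfl hterm, ← Finset.sum_mul, mul_comm]
    congr 1
    rw [defD]
    push_cast
    rw [Finset.sum_sub_distrib]
    simp [Finset.mul_sum]
  -- tail of x at J
  have hsx : Summable (fun n : ℕ => distNearestInt (2 ^ (n + J) * x) / 2 ^ (n + J)) := by
    exact (summable_nat_add_iff (f := fun n : ℕ => distNearestInt (2 ^ n * x) / 2 ^ n) J).2 (summable_takagi x)
  have htailx : (1 - tailS c J) / 2 ^ J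
      ≤ ∑' n : ℕ, distNearestInt (2 ^ (n + J) * x) / 2 ^ (n + J) := by
    have h0 := Summable.le_tsum hsx 0 (fun i _ => div_nonneg (dni_nonneg _) (by positivity))
    rw [zero_add, hxdef, dni_pow_mul c hc J, if_neg (by omega)] at h0
    rwa [← hxdef] at h0
  -- tail of u vanishes
  have hutail : ∑' n : ℕ, distNearestInt (2 ^ (n + J) * u) / 2 ^ (n + J) = 0 := by
    have : ∀ n : ℕ, distNearestInt (2 ^ (n + J) * u) / 2 ^ (n + J) = 0 := by
      intro n
      have h2 := pow_mul_valS c' hc' (n + J)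
      rw [htail0 (n + J) (by omega), add_zero, ← hudef] at h2
      rw [h2, show ((∑ i ∈ range (n+J), c' i * 2 ^ (n + J - i - 1) : ℕ) : ℝ)
          = (((∑ i ∈ range (n+J), c' i * 2 ^ (n + J - i - 1) : ℕ) : ℤ) : ℝ) by push_cast; ring,
        dni_intCast, zero_div]
    rw [tsum_congr this, tsum_zero]
  rw [takagi_split x J, takagi_split u J, hutail, add_zero]
  have hpos : 0 < (1 - tailS c J) / 2 ^ J := div_pos (by linarith) (by positivity)
  nlinarith [mul_nonneg hδ0 hDr]

lemma exists_zero_digit (b : ℕ → ℕ) (hb1 : ∀ i, b i ≤ 1)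
    (hx : ∀ j ≥ 1, 0 ≤ defD b j) (N : ℕ) : ∃ m ≥ N, b m = 0 := by
  by_contra h
  push_neg at h
  have h1 : ∀ m, N ≤ m → b m = 1 := fun m hm => by
    have := h m hm; have := hb1 m; omega
  have hsum : (N:ℤ) + 1 ≤ ∑ i ∈ range (2*N+1), (b i : ℤ) := by
    have hsplit : ∑ i ∈ range (2*N+1), (b i : ℤ)
        = ∑ i ∈ range N, (b i : ℤ) + ∑ i ∈ Finset.Ico N (2*N+1), (b i : ℤ) := by
      rw [Finset.sum_range_add_sum_Ico _ (by omega)]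
    have h2 : ∑ i ∈ Finset.Ico N (2*N+1), (b i : ℤ) = ∑ i ∈ Finset.Ico N (2*N+1), 1 := by
      refine Finset.sum_congr rfl fun i hi => ?_
      rw [h1 i (Finset.mem_Ico.1 hi).1]; norm_num
    have h3 : (0:ℤ) ≤ ∑ i ∈ range N, (b i : ℤ) :=
      Finset.sum_nonneg fun i _ => by positivity
    have h4 : (2*N+1-N) = N + 1 := by omega
    rw [hsplit, h2, Finset.sum_const, Nat.card_Ico, h4, nsmul_eq_mul, mul_one]
    push_cast
    linarith
  have := hx (2*N+1) (by omega)
  rw [defD] at this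
  push_cast at this
  omega

lemma tailS_trunc (b : ℕ → ℕ) (J n : ℕ) (h : J ≤ n) :
    tailS (fun i => if i < J then b i else 0) n = 0 := by
  rw [tailS]
  convert tsum_zero with i
  rw [if_neg (by omega)]
  norm_num




def idxSeq (f : ℕ → ℕ) : ℕ → ℕ
  | 0 => f 0
  | k+1 => f (idxSeq f k + 1)


theorem omegaL_increasing_approx (x : ℝ) (b : ℕ → ℕ) (hb : IsBinaryExpansion b x)
    (hx : ∀ j ≥ 1, 0 ≤ defD b j)
    (hnotzero : ∀ N, ∃ j ≥ N, b j = 1) :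
    ∃ u : ℕ → ℝ, StrictMono u ∧ (∀ k, u k ∈ OmegaL) ∧
      Filter.Tendsto u Filter.atTop (nhds x) ∧ ∀ k, takagi (u k) < takagi x := by
  obtain ⟨hb1, hbx⟩ := hb
  have hxval : x = valS b := hbx
  choose f hf1 hf2 using hnotzero
  let j : ℕ → ℕ := idxSeq f
  have hjs : ∀ k, j (k+1) = f (j k + 1) := fun k => rfl
  have hj1 : ∀ k, b (j k) = 1 := by
    intro k
    cases k with
    | zero => exact hf2 0
    | succ n => rw [hjs]; exact hf2 _
  have hjlt : ∀ k, j k < j (k+1) := fun k => by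
    rw [hjs]; have := hf1 (j k + 1); omega
  have hjge : ∀ k, k ≤ j k := by
    intro k
    induction k with
    | zero => exact Nat.zero_le _
    | succ n ih => have := hjlt n; omega
  let c : ℕ → ℕ → ℕ := fun (k i : ℕ) => if i < j k then b i else 0
  have hcdef : c = fun (k i : ℕ) => if i < j k then b i else 0 := rfl
  have hck : ∀ k i, c k i ≤ 1 := fun k i => by
    by_cases h : i < j k <;> simp [hcdef, h, hb1 i]
  have huk : ∀ k, valS (c k) = ∑ i ∈ range (j k), (b i : ℝ) / 2 ^ (i + 1) := by
    intro k
    rw [valS_eq (c k) (hck k) (j k), tailS_trunc b (j k) (j k) le_rfl, mul_zero, add_zero]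
    refine Finset.sum_congr rfl fun i hi => ?_
    rw [show c k i = b i by simp [hcdef, Finset.mem_range.1 hi]]
  have hdk : ∀ k, x - valS (c k) = (1/2)^(j k) * tailS b (j k) := by
    intro k
    rw [huk k, hxval, valS_eq b hb1 (j k)]
    ring
  refine ⟨fun k => valS (c k), ?_, ?_, ?_, ?_⟩
  · apply strictMono_nat_of_lt_succ
    intro k
    rw [huk k, huk (k+1), ← Finset.sum_range_add_sum_Ico _ (le_of_lt (hjlt k))]
    have hterm : (1:ℝ)/2^(j k + 1) ≤ ∑ i ∈ Finset.Ico (j k) (j (k+1)), (b i : ℝ) / 2 ^ (i + 1) := by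
      have hmem : j k ∈ Finset.Ico (j k) (j (k+1)) := Finset.mem_Ico.2 ⟨le_rfl, hjlt k⟩
      have := Finset.single_le_sum (f := fun i => (b i : ℝ) / 2 ^ (i + 1))
        (fun i _ => by positivity) hmem
      simp only [hj1 k] at this
      simpa using this
    have : (0:ℝ) < 1/2^(j k + 1) := by positivity
    linarith
  · intro k
    refine ⟨c k, ⟨hck k, rfl⟩, ?_⟩
    intro jj hjj
    rcases le_or_gt jj (j k) with h | h
    · have heq : defD (c k) jj = defD b jj := by
        rw [defD, defD]
        congr 1
        congr 1
        refine Finset.sum_congr rfl fun i hi => ?_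
        have : i < j k := by have := Finset.mem_range.1 hi; omega
        simp [hcdef, this]
      rw [heq]; exact hx jj hjj
    · have hsum : ∑ i ∈ range jj, (c k i : ℤ) = ∑ i ∈ range (j k), (b i : ℤ) := by
        rw [← Finset.sum_range_add_sum_Ico _ (le_of_lt h)]
        have h2 : ∑ i ∈ Finset.Ico (j k) jj, (c k i : ℤ) = 0 := by
          refine Finset.sum_eq_zero fun i hi => ?_
          have : ¬ i < j k := by have := (Finset.mem_Ico.1 hi).1; omega
          simp [hcdef, this]
        rw [h2, add_zero]
        refine Finset.sum_congr rfl fun i hi => ?_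
        simp [hcdef, Finset.mem_range.1 hi]
      rcases Nat.eq_zero_or_pos (j k) with h0 | h0
      · rw [defD, hsum, h0]
        simp
      · have hD := hx (j k) h0
        rw [defD] at hD ⊢
        rw [hsum]
        have : (j k : ℤ) ≤ (jj : ℤ) := by exact_mod_cast le_of_lt h
        linarith
  · have h1 : Filter.Tendsto (fun k => x - valS (c k)) Filter.atTop (nhds 0) := by
      apply squeeze_zero (fun k => ?_) (fun k => ?_)
        (tendsto_pow_atTop_nhds_zero_of_lt_one (by norm_num) (by norm_num : (1/2:ℝ) < 1))
      · rw [hdk k]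
        have := tailS_nonneg b (j k)
        positivity
      · rw [hdk k]
        calc (1/2:ℝ)^(j k) * tailS b (j k) ≤ (1/2:ℝ)^(j k) * 1 := by
              have := tailS_le_one b hb1 (j k)
              have : (0:ℝ) ≤ (1/2:ℝ)^(j k) := by positivity
              nlinarith [tailS_le_one b hb1 (j k), tailS_nonneg b (j k)]
          _ ≤ (1/2:ℝ)^k := by
              rw [mul_one]
              exact pow_le_pow_of_le_one (by norm_num) (by norm_num) (hjge k)
    have h2 : Filter.Tendsto (fun k => x - (x - valS (c k))) Filter.atTop (nhds (x - 0)) :=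
      tendsto_const_nhds.sub h1
    simpa using h2
  · intro k
    obtain ⟨m, hm, hm0⟩ := exists_zero_digit b hb1 hx (j k)
    have hD : 0 ≤ defD b (j k) := by
      rcases Nat.eq_zero_or_pos (j k) with h0 | h0
      · rw [defD, h0]; simp
      · exact hx (j k) h0
    rw [hxval]
    exact key_lt b hb1 (j k) (hj1 k) m hm hm0 hD
end

section
/- The level set L(1/2) = {x ∈ [0,1] : τ(x) = 1/2} of the Takagi function is exactly the countably infinite set {x_k : 0 ≤ k ≤ ∞} ∪ {1 − x_k : 0 ≤ k ≤ ∞}, where x_k = 1/2 − Σ_{j=1}^k (1/4)^j and x_∞ = 1/6. -/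
open Finset

/-- `x_k = 1/2 - ∑_{j=1}^k (1/4)^j`. -/
noncomputable def xSeq (k : ℕ) : ℝ := 1 / 2 - ∑ j ∈ Finset.range k, (1 / 4 : ℝ) ^ (j + 1)

namespace TakagiAux

lemma dni_bddBelow (t : ℝ) : BddBelow (Set.range fun n : ℤ => |t - (n : ℝ)|) :=
  ⟨0, by rintro y ⟨n, rfl⟩; exact abs_nonneg _⟩

lemma dni_le (t : ℝ) (n : ℤ) : distNearestInt t ≤ |t - (n : ℝ)| :=
  ciInf_le (dni_bddBelow t) n

lemma le_dni {c t : ℝ} (h : ∀ n : ℤ, c ≤ |t - (n : ℝ)|) : c ≤ distNearestInt t :=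
  le_ciInf h

lemma dni_nonneg (t : ℝ) : 0 ≤ distNearestInt t := le_dni fun _ => abs_nonneg _

lemma dni_le_half (t : ℝ) : distNearestInt t ≤ 1 / 2 :=
  (dni_le t (round t)).trans (abs_sub_round t)

lemma dni_int_sub (m : ℤ) (t : ℝ) : distNearestInt ((m : ℝ) - t) = distNearestInt t := by
  refine le_antisymm (le_dni fun n => ?_) (le_dni fun n => ?_)
  · have h := dni_le ((m : ℝ) - t) (m - n)
    calc distNearestInt ((m : ℝ) - t) ≤ |(m : ℝ) - t - ((m - n : ℤ) : ℝ)| := h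
    _ = |t - (n : ℝ)| := by push_cast; rw [show (m:ℝ) - t - ((m:ℝ) - n) = -(t - n) by ring, abs_neg]
  · have h := dni_le t (m - n)
    calc distNearestInt t ≤ |t - ((m - n : ℤ) : ℝ)| := h
    _ = |(m : ℝ) - t - (n : ℝ)| := by
        push_cast
        rw [show t - ((m:ℝ) - n) = -((m:ℝ) - t - n) by ring, abs_neg]

lemma dni_add_int (t : ℝ) (m : ℤ) : distNearestInt (t + (m : ℝ)) = distNearestInt t := by
  refine le_antisymm (le_dni fun n => ?_) (le_dni fun n => ?_)
  · have h := dni_le (t + (m : ℝ)) (n + m)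
    calc distNearestInt (t + (m : ℝ)) ≤ |t + (m : ℝ) - ((n + m : ℤ) : ℝ)| := h
    _ = |t - (n : ℝ)| := by push_cast; ring_nf
  · have h := dni_le t (n - m)
    calc distNearestInt t ≤ |t - ((n - m : ℤ) : ℝ)| := h
    _ = |t + (m : ℝ) - (n : ℝ)| := by push_cast; ring_nf

lemma dni_eq_self {t : ℝ} (h0 : 0 ≤ t) (h1 : t ≤ 1 / 2) : distNearestInt t = t := by
  refine le_antisymm (by simpa [abs_of_nonneg h0] using dni_le t 0) (le_dni fun n => ?_)
  rcases le_or_gt (n : ℝ) 0 with h | h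
  · have := le_abs_self (t - n); linarith
  · have hn : (1 : ℝ) ≤ n := by exact_mod_cast (by exact_mod_cast h : (0:ℤ) < n)
    have := neg_abs_le (t - n); linarith

lemma dni_pos {t : ℝ} (h0 : 0 < t) (h1 : t < 1) : 0 < distNearestInt t := by
  have hmin : min t (1 - t) ≤ distNearestInt t := by
    refine le_dni fun n => ?_
    rcases le_or_gt (n : ℝ) 0 with h | h
    · have := le_abs_self (t - n)
      exact le_trans (min_le_left _ _) (by linarith)
    · have hn : (1 : ℝ) ≤ n := by exact_mod_cast (by exact_mod_cast h : (0:ℤ) < n)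
      have := neg_abs_le (t - n)
      exact le_trans (min_le_right _ _) (by linarith)
  exact lt_of_lt_of_le (lt_min h0 (by linarith)) hmin

lemma dni_intCast (m : ℤ) : distNearestInt (m : ℝ) = 0 :=
  le_antisymm (by simpa using dni_le (m : ℝ) m) (dni_nonneg _)

/-- The pairing bound: `⟪t⟫ + ⟪2t⟫/2 ≤ 1/2`. -/
lemma pair_bound (t : ℝ) : distNearestInt t + distNearestInt (2 * t) / 2 ≤ 1 / 2 := by
  set f := Int.fract t with hf
  have hf0 : 0 ≤ f := Int.fract_nonneg t
  have hf1 : f < 1 := Int.fract_lt_one t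
  have ht : (⌊t⌋ : ℝ) = t - f := by
    have := Int.floor_add_fract t
    rw [hf]; linarith
  have ha : distNearestInt t ≤ f := by
    have h := dni_le t ⌊t⌋
    rwa [ht, show t - (t - f) = f by ring, abs_of_nonneg hf0] at h
  have hb : distNearestInt t ≤ 1 - f := by
    have h := dni_le t (⌊t⌋ + 1)
    rwa [Int.cast_add, Int.cast_one, ht, show t - (t - f + 1) = -(1 - f) by ring,
      abs_neg, abs_of_nonneg (by linarith)] at h
  have hc : distNearestInt (2 * t) ≤ |2 * f - 1| := by
    have h := dni_le (2 * t) (2 * ⌊t⌋ + 1)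
    rwa [Int.cast_add, Int.cast_mul, Int.cast_one, Int.cast_ofNat, ht,
      show 2 * t - ((2:ℝ) * (t - f) + 1) = 2 * f - 1 by ring] at h
  rcases le_or_gt f (1 / 2) with h | h
  · rw [abs_of_nonpos (by linarith)] at hc; linarith
  · rw [abs_of_nonneg (by linarith)] at hc; linarith

/-- Summability of the Takagi series. -/
lemma takagi_summable (x : ℝ) :
    Summable fun n : ℕ => distNearestInt (2 ^ n * x) / 2 ^ n := by
  refine Summable.of_nonneg_of_le (fun n => div_nonneg (dni_nonneg _) (by positivity))
    (fun n => ?_) ((summable_geometric_of_lt_one (by norm_num) (by norm_num : (1/2:ℝ) < 1)).mul_left (1/2))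
  have h2 : (0:ℝ) < 2 ^ n := by positivity
  have : (1/2 : ℝ) * (1/2)^n = (1/2) / 2^n := by rw [div_pow]; ring
  rw [this, div_le_div_iff₀ h2 h2]
  have := dni_le_half (2 ^ n * x)
  nlinarith [dni_nonneg (2 ^ n * x)]

lemma takagi_nonneg (x : ℝ) : 0 ≤ takagi x :=
  tsum_nonneg fun n => div_nonneg (dni_nonneg _) (by positivity)

set_option maxHeartbeats 1000000 in
lemma takagi_fe (x : ℝ) : takagi x = distNearestInt x + takagi (2 * x) / 2 := by
  have hs := takagi_summable x
  have hs' : Summable fun n : ℕ => distNearestInt (2 ^ (n + 1) * x) / 2 ^ (n + 1) :=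
    (summable_nat_add_iff 1).2 hs
  rw [takagi, Summable.tsum_eq_zero_add hs]
  simp only [pow_zero, one_mul, div_one]
  congr 1
  rw [takagi, ← tsum_div_const]
  exact tsum_congr fun n => by
    rw [show (2:ℝ) ^ (n + 1) * x = 2 ^ n * (2 * x) by ring]
    rw [pow_succ]; ring

lemma takagi_one_sub (x : ℝ) : takagi (1 - x) = takagi x := by
  unfold takagi
  exact tsum_congr fun n => by
    rw [show (2:ℝ) ^ n * (1 - x) = ((2 ^ n : ℤ) : ℝ) - 2 ^ n * x by push_cast; ring, dni_int_sub]

lemma takagi_le (x : ℝ) : takagi x ≤ 2 / 3 := by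
  set f : ℕ → ℝ := fun n => distNearestInt (2 ^ n * x) / 2 ^ n with hfdef
  have hs := takagi_summable x
  have he : Summable fun k => f (2 * k) := hs.comp_injective (mul_right_injective₀ two_ne_zero)
  have ho : Summable fun k => f (2 * k + 1) :=
    hs.comp_injective fun a b h => by omega
  have hgeo : Summable fun k : ℕ => (1/2 : ℝ) * (1/4) ^ k :=
    (summable_geometric_of_lt_one (by norm_num) (by norm_num : (1/4:ℝ) < 1)).mul_left _
  have key : ∀ k : ℕ, f (2 * k) + f (2 * k + 1) ≤ (1/2) * (1/4) ^ k := by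
    intro k
    have hp := pair_bound (2 ^ (2 * k) * x)
    have h2k : (0:ℝ) < 2 ^ (2 * k) := by positivity
    have e1 : (1/4 : ℝ) ^ k = (2 ^ (2 * k))⁻¹ := by
      rw [pow_mul]; rw [← inv_pow]; norm_num
    have e2 : f (2 * k) + f (2 * k + 1)
        = (distNearestInt (2 ^ (2 * k) * x) + distNearestInt (2 * (2 ^ (2 * k) * x)) / 2) / 2 ^ (2 * k) := by
      rw [hfdef]
      simp only
      rw [show (2:ℝ) ^ (2 * k + 1) * x = 2 * (2 ^ (2 * k) * x) by rw [pow_succ]; ring, pow_succ]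
      ring
    rw [e2, e1]
    rw [div_le_iff₀ h2k] at *
    calc distNearestInt (2 ^ (2 * k) * x) + distNearestInt (2 * (2 ^ (2 * k) * x)) / 2
        ≤ 1 / 2 := hp
      _ = 1/2 * (2 ^ (2*k))⁻¹ * 2 ^ (2*k) := by field_simp
  calc takagi x = (∑' k, f (2 * k)) + ∑' k, f (2 * k + 1) := (tsum_even_add_odd he ho).symm
    _ = ∑' k, (f (2 * k) + f (2 * k + 1)) := (Summable.tsum_add he ho).symm
    _ ≤ ∑' k : ℕ, (1/2 : ℝ) * (1/4) ^ k := Summable.tsum_le_tsum key (he.add ho) hgeo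
    _ = 2 / 3 := by
        rw [tsum_mul_left, tsum_geometric_of_lt_one (by norm_num) (by norm_num)]
        norm_num

lemma takagi_one : takagi 1 = 0 := by
  unfold takagi
  have : ∀ n : ℕ, distNearestInt (2 ^ n * 1) / 2 ^ n = 0 := by
    intro n
    rw [mul_one, show ((2:ℝ) ^ n) = ((2 ^ n : ℤ) : ℝ) by push_cast; ring, dni_intCast]
    simp
  rw [tsum_congr this, tsum_zero]

lemma takagi_pos {x : ℝ} (h0 : 0 < x) (h1 : x < 1) : 0 < takagi x := by
  have hs := takagi_summable x
  have h := Summable.le_tsum hs 0 (fun j _ => div_nonneg (dni_nonneg _) (by positivity))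
  simp only [pow_zero, one_mul, div_one] at h
  exact lt_of_lt_of_le (dni_pos h0 h1) h

lemma takagi_eq_zero {x : ℝ} (h0 : 0 ≤ x) (h1 : x ≤ 1) (h : takagi x = 0) : x = 0 ∨ x = 1 := by
  by_contra hc
  push_neg at hc
  rcases hc with ⟨hx0, hx1⟩
  have := takagi_pos (lt_of_le_of_ne h0 (Ne.symm hx0)) (lt_of_le_of_ne h1 hx1)
  linarith

lemma fe_half {x : ℝ} (h0 : 0 ≤ x) (h1 : x ≤ 1 / 2) :
    takagi x = x + takagi (2 * x) / 2 := by
  rw [takagi_fe, dni_eq_self h0 h1]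


/-- Closed form for `xSeq`. -/
lemma xSeq_eq (k : ℕ) : xSeq k = 1 / 6 + (1 / 4 : ℝ) ^ k / 3 := by
  induction k with
  | zero => simp [xSeq]; norm_num
  | succ n ih =>
      have : xSeq (n + 1) = xSeq n - (1 / 4 : ℝ) ^ (n + 1) := by
        rw [xSeq, xSeq, Finset.sum_range_succ]; ring
      rw [this, ih, pow_succ]; ring

lemma xSeq_pos_aux (k : ℕ) : 0 < (1 / 4 : ℝ) ^ k := by positivity

lemma xSeq_le_one_aux (k : ℕ) : (1 / 4 : ℝ) ^ k ≤ 1 :=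
  pow_le_one₀ (by norm_num) (by norm_num)

lemma xSeq_mem (k : ℕ) : 1 / 6 < xSeq k ∧ xSeq k ≤ 1 / 2 := by
  rw [xSeq_eq]
  constructor
  · nlinarith [xSeq_pos_aux k]
  · nlinarith [xSeq_le_one_aux k]

lemma two_xSeq_succ (m : ℕ) : 2 * xSeq (m + 1) = (1 + 2 * xSeq m) / 4 := by
  rw [xSeq_eq, xSeq_eq, pow_succ]; ring

lemma xSeq_zero : xSeq 0 = 1 / 2 := by rw [xSeq_eq]; norm_num

/-- The step lemma for the set `A = {a : τ(a) = 1 - a}`. -/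
lemma stepA {a : ℝ} (h0 : 0 ≤ a) (h1 : a ≤ 1) (hA : takagi a = 1 - a) :
    a = 1 ∨ a = 1 / 2 ∨ a = 3 / 8 ∨
      ∃ u, 1 / 3 ≤ u ∧ u < 1 / 2 ∧ takagi u = 1 - u ∧ a = (1 + u) / 4 := by
  rcases le_or_gt (1 / 2) a with hge | hlt
  · -- a ≥ 1/2 : a = 1 or a = 1/2
    have h2 : takagi (1 - a) = (1 - a) + takagi (2 * (1 - a)) / 2 :=
      fe_half (by linarith) (by linarith)
    rw [takagi_one_sub] at h2
    have h3 : takagi (2 * (1 - a)) = 0 := by linarith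
    rcases takagi_eq_zero (by linarith) (by linarith) h3 with h | h
    · left; linarith
    · right; left; linarith
  · -- a < 1/2
    have hfe : takagi a = a + takagi (2 * a) / 2 := fe_half h0 hlt.le
    have h2a : takagi (2 * a) = 2 - 4 * a := by linarith
    have h13 : 1 / 3 ≤ a := by
      have := takagi_le (2 * a); linarith
    set z := 1 - 2 * a with hz
    have hz0 : 0 < z := by rw [hz]; linarith
    have hz3 : z ≤ 1 / 3 := by rw [hz]; linarith
    have hτz : takagi z = 2 * z := by
      have : takagi (1 - z) = takagi z := takagi_one_sub z
      rw [show 1 - z = 2 * a by rw [hz]; ring, h2a] at this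
      rw [← this, hz]; ring
    have hfe2 : takagi z = z + takagi (2 * z) / 2 := fe_half hz0.le (by linarith)
    have hτ2z : takagi (2 * z) = 2 * z := by linarith
    rcases le_or_gt z (1 / 4) with hzq | hzq
    · -- τ(4z) = 0
      have hfe3 : takagi (2 * z) = 2 * z + takagi (2 * (2 * z)) / 2 :=
        fe_half (by linarith) (by linarith)
      have h4z : takagi (2 * (2 * z)) = 0 := by linarith
      rcases takagi_eq_zero (by linarith) (by linarith) h4z with h | h
      · exfalso; linarith
      · right; right; left; rw [hz] at h; linarith
    · -- the contraction case
      refine Or.inr (Or.inr (Or.inr ⟨1 - 2 * z, by linarith, by linarith, ?_, by rw [hz]; ring⟩))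
      have : takagi (1 - 2 * z) = takagi (2 * z) := takagi_one_sub (2 * z)
      rw [this, hτ2z]; ring

/-- The map `u ↦ (1+u)/4` preserves membership in `A`. -/
lemma phiA {u : ℝ} (h0 : 0 ≤ u) (h1 : u ≤ 1) (hA : takagi u = 1 - u) :
    takagi ((1 + u) / 4) = 1 - (1 + u) / 4 := by
  have hy : takagi ((1 + u) / 4) = (1 + u) / 4 + takagi (2 * ((1 + u) / 4)) / 2 :=
    fe_half (by linarith) (by linarith)
  have e1 : 2 * ((1 + u) / 4) = 1 - (1 - u) / 2 := by ring
  have h2y : takagi (1 - (1 - u) / 2) = takagi ((1 - u) / 2) := takagi_one_sub _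
  have h3 : takagi ((1 - u) / 2) = (1 - u) / 2 + takagi (2 * ((1 - u) / 2)) / 2 :=
    fe_half (by linarith) (by linarith)
  have e2 : 2 * ((1 - u) / 2) = 1 - u := by ring
  have h4 : takagi (1 - u) = takagi u := takagi_one_sub u
  rw [e2] at h3
  rw [h4, hA] at h3
  rw [e1, h2y, h3] at hy
  rw [hy]; ring

/-- Every `2 * xSeq k` is in `A`. -/
lemma A_xSeq (k : ℕ) : takagi (2 * xSeq k) = 1 - 2 * xSeq k := by
  induction k with
  | zero =>
      rw [xSeq_zero]
      norm_num [takagi_one]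
  | succ n ih =>
      rw [two_xSeq_succ]
      exact phiA (by nlinarith [(xSeq_mem n).1]) (by nlinarith [(xSeq_mem n).2]) ih

lemma A_third : takagi (1 / 3) = 2 / 3 := by
  have h1 : takagi (1 / 3 : ℝ) = 1 / 3 + takagi (2 * (1 / 3)) / 2 :=
    fe_half (by norm_num) (by norm_num)
  have h2 : takagi (1 - (1 / 3 : ℝ)) = takagi (1 / 3) := takagi_one_sub _
  rw [show (2:ℝ) * (1 / 3) = 1 - 1 / 3 by norm_num, h2] at h1
  linarith

/-- Strong induction classification of `A`. -/
lemma classify_aux :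
    ∀ n : ℕ, ∀ a : ℝ, 0 ≤ a → a ≤ 1 → takagi a = 1 - a → a ≠ 1 →
      1 / 6 ≤ 4 ^ n * |a - 1 / 3| → ∃ m, a = 2 * xSeq m := by
  intro n
  induction n with
  | zero =>
      intro a h0 h1 hA hne hb
      rw [pow_zero, one_mul] at hb
      rcases stepA h0 h1 hA with h | h | h | ⟨u, hu1, hu2, hu3, rfl⟩
      · exact absurd h hne
      · exact ⟨1, by rw [h, xSeq_eq]; norm_num⟩
      · exact ⟨2, by rw [h, xSeq_eq]; norm_num⟩
      · exfalso
        rw [abs_of_nonneg (by linarith)] at hb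
        linarith
  | succ n ih =>
      intro a h0 h1 hA hne hb
      rcases stepA h0 h1 hA with h | h | h | ⟨u, hu1, hu2, hu3, rfl⟩
      · exact absurd h hne
      · exact ⟨1, by rw [h, xSeq_eq]; norm_num⟩
      · exact ⟨2, by rw [h, xSeq_eq]; norm_num⟩
      · have hb' : 1 / 6 ≤ 4 ^ n * |u - 1 / 3| := by
          have : |(1 + u) / 4 - 1 / 3| = |u - 1 / 3| / 4 := by
            rw [show (1 + u) / 4 - 1 / 3 = (u - 1 / 3) / 4 by ring, abs_div]
            norm_num
          rw [this, pow_succ] at hb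
          nlinarith [abs_nonneg (u - 1/3), pow_pos (by norm_num : (0:ℝ) < 4) n]
        obtain ⟨m, hm⟩ := ih u (by linarith) (by linarith) hu3 (by intro h; rw [h] at hu2; linarith) hb'
        exact ⟨m + 1, by rw [two_xSeq_succ, hm]⟩

lemma classify {a : ℝ} (h0 : 0 ≤ a) (h1 : a ≤ 1) (hA : takagi a = 1 - a) :
    a = 1 / 3 ∨ ∃ m, a = 2 * xSeq m := by
  by_cases hne : a = 1
  · exact Or.inr ⟨0, by rw [hne, xSeq_zero]; norm_num⟩
  by_cases h3 : a = 1 / 3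
  · exact Or.inl h3
  · right
    have hpos : 0 < |a - 1 / 3| := abs_pos.mpr (sub_ne_zero.mpr h3)
    obtain ⟨n, hn⟩ := pow_unbounded_of_one_lt ((1 / 6) / |a - 1 / 3|) (by norm_num : (1:ℝ) < 4)
    refine classify_aux n a h0 h1 hA hne ?_
    rw [div_lt_iff₀ hpos] at hn
    linarith

/-- Characterization on the lower half. -/
lemma low_char {x : ℝ} (h0 : 0 ≤ x) (h2 : x ≤ 1 / 2) :
    takagi x = 1 / 2 ↔ x ∈ Set.range xSeq ∪ {(1 / 6 : ℝ)} := by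
  have hfe : takagi x = x + takagi (2 * x) / 2 := fe_half h0 h2
  constructor
  · intro h
    have hA : takagi (2 * x) = 1 - 2 * x := by linarith
    rcases classify (by linarith) (by linarith) hA with h3 | ⟨m, hm⟩
    · right; simp only [Set.mem_singleton_iff]; linarith
    · left; exact ⟨m, by linarith⟩
  · rintro (⟨m, rfl⟩ | h)
    · have := A_xSeq m
      linarith
    · simp only [Set.mem_singleton_iff] at h
      subst h
      have := A_third
      rw [show (2:ℝ) * (1 / 6) = 1 / 3 by norm_num] at hfe
      linarith

lemma S_bounds {x : ℝ} (h : x ∈ Set.range xSeq ∪ {(1 / 6 : ℝ)}) :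
    1 / 6 ≤ x ∧ x ≤ 1 / 2 := by
  rcases h with ⟨m, rfl⟩ | h
  · exact ⟨(xSeq_mem m).1.le, (xSeq_mem m).2⟩
  · simp only [Set.mem_singleton_iff] at h; subst h; norm_num

lemma xSeq_injective : Function.Injective xSeq := by
  intro a b h
  rw [xSeq_eq, xSeq_eq] at h
  have h4 : (1 / 4 : ℝ) ^ a = (1 / 4) ^ b := by linarith
  by_contra hne
  rcases Nat.lt_or_ge a b with hl | hg
  · have := pow_lt_pow_right_of_lt_one₀ (by norm_num : (0:ℝ) < 1/4) (by norm_num) hl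
    linarith
  · have hg' : b < a := lt_of_le_of_ne hg (Ne.symm hne)
    have := pow_lt_pow_right_of_lt_one₀ (by norm_num : (0:ℝ) < 1/4) (by norm_num) hg'
    linarith

end TakagiAux

open TakagiAux in
theorem level_set_one_half :
    {x ∈ Set.Icc (0:ℝ) 1 | takagi x = 1 / 2} =
      ((Set.range xSeq ∪ {1 / 6}) ∪ (fun x => 1 - x) '' (Set.range xSeq ∪ {1 / 6})) ∧
    Set.Countable {x ∈ Set.Icc (0:ℝ) 1 | takagi x = 1 / 2} ∧
    Set.Infinite {x ∈ Set.Icc (0:ℝ) 1 | takagi x = 1 / 2} := by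
  have hset : {x ∈ Set.Icc (0:ℝ) 1 | takagi x = 1 / 2} =
      ((Set.range xSeq ∪ {1 / 6}) ∪ (fun x => 1 - x) '' (Set.range xSeq ∪ {1 / 6})) := by
    ext x
    constructor
    · rintro ⟨⟨hx0, hx1⟩, hτ⟩
      rcases le_or_gt x (1 / 2) with h | h
      · exact Set.mem_union_left _ ((low_char hx0 h).1 hτ)
      · refine Set.mem_union_right _ ⟨1 - x, (low_char (by linarith) (by linarith)).1 ?_, by ring⟩
        rw [takagi_one_sub]; exact hτ
    · intro hx
      rcases hx with hS | ⟨y, hy, hxy⟩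
      · obtain ⟨hb1, hb2⟩ := S_bounds hS
        exact ⟨⟨by linarith, by linarith⟩, (low_char (by linarith) hb2).2 hS⟩
      · obtain ⟨hb1, hb2⟩ := S_bounds hy
        simp only at hxy
        subst hxy
        refine ⟨⟨by linarith, by linarith⟩, ?_⟩
        rw [takagi_one_sub]
        exact (low_char (by linarith) hb2).2 hy
  refine ⟨hset, ?_, ?_⟩
  · rw [hset]
    have hc : Set.Countable (Set.range xSeq ∪ {(1/6 : ℝ)}) :=
      (Set.countable_range xSeq).union (Set.countable_singleton _)
    exact (hc.union (hc.image _))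
  · refine Set.Infinite.mono ?_ (Set.infinite_range_of_injective xSeq_injective)
    rintro x ⟨m, rfl⟩
    obtain ⟨hb1, hb2⟩ := xSeq_mem m
    exact ⟨⟨by linarith, by linarith⟩, (low_char (by linarith) hb2).2 (Set.mem_union_left _ ⟨m, rfl⟩)⟩
end

section
/- For every k ≥ 0, the Takagi function satisfies τ(x_k) = 1/2 where x_k = 1/2 − Σ_{j=1}^k (1/4)^j; in particular τ(1/6) = 1/2, τ(1/4) = 1/2, and τ(1/2) = 1/2. -/
open Finset

lemma distNearestInt_eq (m : ℤ) (r : ℝ) (h : |r| ≤ 1/2) : distNearestInt ((m:ℝ) + r) = |r| := by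
  unfold distNearestInt
  have hb : BddBelow (Set.range fun n : ℤ => |(m:ℝ) + r - n|) := by
    refine ⟨0, ?_⟩; rintro y ⟨n, rfl⟩; exact abs_nonneg _
  apply le_antisymm
  · have := ciInf_le hb m
    simpa using this
  · apply le_ciInf
    intro n
    by_cases hn : n = m
    · subst hn; simp
    · have h1 : (1:ℝ) ≤ |(m:ℝ) - n| := by
        have h0 : (m - n : ℤ) ≠ 0 := sub_ne_zero.mpr (fun h => hn h.symm)
        have h0' : (1:ℤ) ≤ |m - n| := Int.one_le_abs h0
        calc (1:ℝ) ≤ ((|m - n| : ℤ) : ℝ) := by exact_mod_cast h0'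
          _ = |(m:ℝ) - n| := by rw [Int.cast_abs]; push_cast; ring_nf
      have h2 : |(m:ℝ) - n| - |-r| ≤ |((m:ℝ) - n) - (-r)| := abs_sub_abs_le_abs_sub _ _
      have h3 : (m:ℝ) + r - n = ((m:ℝ) - n) - (-r) := by ring
      rw [h3]
      rw [abs_neg] at h2
      linarith

lemma two_pow_mod (n : ℕ) : ∃ m : ℤ, (2:ℤ)^(n+1) = 6*m + 2*(-1)^n := by
  induction n with
  | zero => exact ⟨0, by norm_num⟩
  | succ n ih =>
    obtain ⟨m, hm⟩ := ih
    exact ⟨2*m + (-1)^n, by rw [pow_succ, hm]; ring⟩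

lemma four_pow_mod (k : ℕ) : ∃ c : ℤ, (4:ℤ)^k + 2 = 3*c := by
  induction k with
  | zero => exact ⟨1, by norm_num⟩
  | succ k ih =>
    obtain ⟨c, hc⟩ := ih
    refine ⟨4*c - 2, ?_⟩
    have : (4:ℤ)^(k+1) = 4*(4^k + 2) - 8 := by rw [pow_succ]; ring
    rw [this, hc]; ring

lemma geom_half (m : ℕ) : ∑ i ∈ Finset.range m, ((1/2:ℝ))^(i+1) = 1 - (1/2)^m := by
  induction m with
  | zero => simp
  | succ m ih => rw [Finset.sum_range_succ, ih]; ring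

lemma dist_aux (n : ℕ) (ε : ℝ) (h0 : 0 ≤ ε) (h1 : ε ≤ 1/3) (h2 : Even n → ε ≤ 1/6) :
    distNearestInt ((2:ℝ)^(n+1)/6 + ε) = 1/3 + (-1)^n * ε := by
  obtain ⟨m, hm⟩ := two_pow_mod n
  have hm' : (2:ℝ)^(n+1) = 6*m + 2*(-1)^n := by exact_mod_cast hm
  have he : (2:ℝ)^(n+1)/6 + ε = (m:ℝ) + ((-1)^n/3 + ε) := by rw [hm']; ring
  rw [he]
  rcases Nat.even_or_odd n with hev | hod
  · have hp : ((-1:ℝ))^n = 1 := hev.neg_one_pow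
    have h6 := h2 hev
    rw [hp, distNearestInt_eq]
    · rw [abs_of_nonneg (by linarith)]; ring
    · rw [abs_of_nonneg (by linarith)]; linarith
  · have hp : ((-1:ℝ))^n = -1 := hod.neg_one_pow
    rw [hp, distNearestInt_eq]
    · rw [abs_of_nonpos (by linarith)]; ring
    · rw [abs_of_nonpos (by linarith)]; linarith

lemma takagi_main (k : ℕ) : takagi (1/6 + (1/4:ℝ)^k/3) = 1/2 := by
  set y : ℝ := 1/6 + (1/4:ℝ)^k/3 with hy
  have h4k : ((4:ℝ))^k * (1/4:ℝ)^k = 1 := by rw [← mul_pow]; norm_num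
  have h2k : ((2:ℝ))^(2*k) = 4^k := by rw [pow_mul]; norm_num
  have hinv : ((1/4):ℝ)^k = ((2:ℝ)^(2*k))⁻¹ := by
    rw [h2k, one_div, inv_pow]
  obtain ⟨c, hc⟩ := four_pow_mod k
  have hc' : ((4:ℝ))^k + 2 = 3*c := by exact_mod_cast hc
  have hsupp : ∀ n ∉ Finset.range (2*k+1), distNearestInt (2^n * y) / 2^n = 0 := by
    intro n hn
    rw [Finset.mem_range, not_lt] at hn
    obtain ⟨j, rfl⟩ := Nat.exists_eq_add_of_le hn
    have hsplit : (2:ℝ)^(2*k+1+j) = 4^k * 2 * 2^j := by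
      rw [pow_add, pow_succ, h2k]
    have he : (2:ℝ)^(2*k+1+j) * y = ((2^j * c : ℤ) : ℝ) + 0 := by
      push_cast
      rw [hy]
      linear_combination (1/6 + (1/4:ℝ)^k/3) * hsplit + (2/3)*(2:ℝ)^j*h4k + ((2:ℝ)^j/3)*hc'
    rw [he, distNearestInt_eq _ 0 (by norm_num), abs_zero, zero_div]
  have hterm : ∀ i ∈ Finset.range (2*k), distNearestInt (2^(i+1) * y) / 2^(i+1)
      = (1/3)*(1/2:ℝ)^(i+1) + (-1)^i * (1/4)^k/3 := by
    intro i hi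
    rw [Finset.mem_range] at hi
    set ε : ℝ := 2^(i+1) * (1/4)^k / 3 with hε
    have hye : (2:ℝ)^(i+1) * y = (2:ℝ)^(i+1)/6 + ε := by rw [hy, hε]; ring
    have hεpos : 0 ≤ ε := by positivity
    have hpos : (0:ℝ) < 2^(2*k) := by positivity
    have hmono : ∀ a b : ℕ, a ≤ b → (2:ℝ)^a ≤ 2^b :=
      fun a b h => pow_le_pow_right₀ (by norm_num) h
    have hε3 : ε ≤ 1/3 := by
      have key : (2:ℝ)^(i+1) * (1/4)^k ≤ 1 := by
        rw [hinv, ← div_eq_mul_inv, div_le_one hpos]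
        exact hmono _ _ (by omega)
      rw [hε]; linarith
    have hε6 : Even i → ε ≤ 1/6 := by
      intro hev
      have hi2 : i + 2 ≤ 2*k := by
        obtain ⟨r, rfl⟩ := hev; omega
      have key2 : (2:ℝ)^(i+2) ≤ 2^(2*k) := hmono _ _ hi2
      have hpp : (2:ℝ)^(i+2) = 2^(i+1) * 2 := by rw [pow_succ]
      have key : (2:ℝ)^(i+1) * (1/4)^k ≤ 1/2 := by
        rw [hinv, ← div_eq_mul_inv, div_le_div_iff₀ hpos (by norm_num)]
        nlinarith
      rw [hε]; linarith
    rw [hye, dist_aux i ε hεpos hε3 hε6, hε]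
    have hp2 : ((1/2:ℝ))^(i+1) = ((2:ℝ)^(i+1))⁻¹ := by rw [one_div, inv_pow]
    have hp : (0:ℝ) < 2^(i+1) := by positivity
    rw [hp2]
    field_simp
  have key : takagi y = (∑ i ∈ Finset.range (2*k), distNearestInt (2^(i+1) * y) / 2^(i+1))
      + distNearestInt (2^0 * y) / 2^0 := by
    unfold takagi
    rw [tsum_eq_sum hsupp, Finset.sum_range_succ']
  rw [key, Finset.sum_congr rfl hterm]
  have hzero : distNearestInt ((2:ℝ)^0 * y) / 2^0 = y := by
    have h01 : (0:ℝ) ≤ (1/4:ℝ)^k := by positivity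
    have h02 : ((1/4):ℝ)^k ≤ 1 := pow_le_one₀ (by norm_num) (by norm_num)
    have he0 : (2:ℝ)^0 * y = ((0:ℤ):ℝ) + y := by norm_num
    rw [he0, distNearestInt_eq 0 y (by rw [hy, abs_of_nonneg (by linarith)]; linarith)]
    rw [abs_of_nonneg (by rw [hy]; linarith)]
    norm_num
  rw [hzero]
  have hsum : ∑ i ∈ Finset.range (2*k), ((1/3)*(1/2:ℝ)^(i+1) + (-1)^i * (1/4)^k/3)
      = (1/3)*(1 - (1/2)^(2*k)) := by
    rw [Finset.sum_add_distrib, ← Finset.mul_sum, geom_half]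
    have hs2 : ∑ i ∈ Finset.range (2*k), ((-1:ℝ))^i * (1/4)^k/3
        = (∑ i ∈ Finset.range (2*k), ((-1:ℝ))^i) * ((1/4)^k/3) := by
      rw [Finset.sum_mul]
      exact Finset.sum_congr rfl (fun i _ => by ring)
    rw [hs2, neg_one_geom_sum]
    simp [Nat.even_mul]
  rw [hsum]
  have hhalf : ((1/2:ℝ))^(2*k) = (1/4)^k := by rw [pow_mul]; norm_num
  rw [hhalf, hy]
  ring

lemma takagi_sixth : takagi (1/6) = 1/2 := by
  have hf : (fun n : ℕ => distNearestInt ((2:ℝ)^n * (1/6)) / 2^n)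
      = fun n : ℕ => (1/3:ℝ)*(1/2)^n - (1/6)*(if n = 0 then 1 else 0) := by
    funext n
    cases n with
    | zero =>
      have he : (2:ℝ)^0 * (1/6) = ((0:ℤ):ℝ) + 1/6 := by norm_num
      rw [he, distNearestInt_eq 0 (1/6) (by rw [abs_of_nonneg] <;> norm_num)]
      norm_num
    | succ i =>
      have he : (2:ℝ)^(i+1) * (1/6) = (2:ℝ)^(i+1)/6 + 0 := by ring
      rw [he, dist_aux i 0 le_rfl (by norm_num) (fun _ => by norm_num)]
      have hp2 : ((1/2:ℝ))^(i+1) = ((2:ℝ)^(i+1))⁻¹ := by rw [one_div, inv_pow]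
      have hp : (0:ℝ) < 2^(i+1) := by positivity
      rw [hp2]
      simp only [if_neg (Nat.succ_ne_zero i)]
      field_simp
      ring
  unfold takagi
  rw [hf]
  have hs1 : Summable (fun n : ℕ => (1/3:ℝ)*(1/2)^n) :=
    (summable_geometric_of_lt_one (by norm_num) (by norm_num)).mul_left _
  have hs2 : Summable (fun n : ℕ => (1/6:ℝ)*(if n = 0 then 1 else 0)) :=
    ((hasSum_ite_eq 0 (1:ℝ)).summable).mul_left _
  rw [Summable.tsum_sub hs1 hs2, tsum_mul_left, tsum_mul_left,
    tsum_geometric_of_lt_one (by norm_num) (by norm_num), tsum_ite_eq]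
  norm_num

lemma xSeq_eq (k : ℕ) : xSeq k = 1/6 + (1/4:ℝ)^k/3 := by
  induction k with
  | zero => simp [xSeq]; norm_num
  | succ k ih =>
    have h : xSeq (k+1) = xSeq k - (1/4)^(k+1) := by
      rw [xSeq, xSeq, Finset.sum_range_succ]; ring
    rw [h, ih, pow_succ]; ring

theorem takagi_xSeq_eq_half :
    (∀ k : ℕ, takagi (xSeq k) = 1 / 2) ∧
    takagi (1 / 6) = 1 / 2 ∧ takagi (1 / 4) = 1 / 2 ∧ takagi (1 / 2) = 1 / 2 := by
  refine ⟨fun k => ?_, takagi_sixth, ?_, ?_⟩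
  · rw [xSeq_eq]; exact takagi_main k
  · have h := takagi_main 1
    norm_num at h
    exact h
  · have h := takagi_main 0
    norm_num at h
    exact h
end
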